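/- arXiv:1304.2331 — 7 statements merged into one kernel-verified Lean document; each statement's English description precedes it below -/
import Mathlib

section
/- Let ρ be a nonnegative integrable density on [0,1], r ∈ [0,1], and e(q) = r·∫_q^1 ρ(η)/η dη + (1-r)·∫_0^q ρ(η)/(1-η) dη (all finite). Then e attains its minimum over [0,1] at q = r, i.e., e(r) ≤ e(q) for all q ∈ [0,1]. -/
open MeasureTheory

/-- Lemma 3, property 3 (the salient property of binary proper scoring rules):
the expected RBPSR cost `e` attains its minimum over `[0,1]` at `q = r`. -/
theorem stmt3 (ρ : ℝ → ℝ) (r : ℝ)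
    (hρ : ∀ η ∈ Set.Icc (0:ℝ) 1, 0 ≤ ρ η)
    (hnorm : (∫ η in (0:ℝ)..1, ρ η) = 1)
    (h1 : IntervalIntegrable (fun η => ρ η / η) volume 0 1)
    (h2 : IntervalIntegrable (fun η => ρ η / (1 - η)) volume 0 1)
    (hr : r ∈ Set.Icc (0:ℝ) 1)
    (e : ℝ → ℝ)
    (he : ∀ q, e q = r * (∫ η in q..1, ρ η / η) + (1 - r) * ∫ η in (0:ℝ)..q, ρ η / (1 - η)) :
    ∀ q ∈ Set.Icc (0:ℝ) 1, e r ≤ e q := by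
  intro q hq
  obtain ⟨hr0, hr1⟩ := hr
  obtain ⟨hq0, hq1⟩ := hq
  have hmem : ∀ a b : ℝ, a ∈ Set.Icc (0:ℝ) 1 → b ∈ Set.Icc (0:ℝ) 1 →
      Set.uIcc a b ⊆ Set.uIcc (0:ℝ) 1 := by
    intro a b ha hb
    rw [Set.uIcc_of_le (by norm_num : (0:ℝ) ≤ 1)]
    exact Set.uIcc_subset_Icc ha hb
  have hsub1 : ∀ a b : ℝ, a ∈ Set.Icc (0:ℝ) 1 → b ∈ Set.Icc (0:ℝ) 1 →
      IntervalIntegrable (fun η => ρ η / η) volume a b :=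
    fun a b ha hb => h1.mono_set (hmem a b ha hb)
  have hsub2 : ∀ a b : ℝ, a ∈ Set.Icc (0:ℝ) 1 → b ∈ Set.Icc (0:ℝ) 1 →
      IntervalIntegrable (fun η => ρ η / (1 - η)) volume a b :=
    fun a b ha hb => h2.mono_set (hmem a b ha hb)
  have hqm : q ∈ Set.Icc (0:ℝ) 1 := ⟨hq0, hq1⟩
  have hrm : r ∈ Set.Icc (0:ℝ) 1 := ⟨hr0, hr1⟩
  have h1m : (1:ℝ) ∈ Set.Icc (0:ℝ) 1 := by norm_num
  have h0m : (0:ℝ) ∈ Set.Icc (0:ℝ) 1 := by norm_num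
  -- split integrals
  have add1 : (∫ η in q..r, ρ η / η) + (∫ η in r..1, ρ η / η) = ∫ η in q..1, ρ η / η :=
    intervalIntegral.integral_add_adjacent_intervals (hsub1 q r hqm hrm) (hsub1 r 1 hrm h1m)
  have add2 : (∫ η in (0:ℝ)..r, ρ η / (1 - η)) + (∫ η in r..q, ρ η / (1 - η))
      = ∫ η in (0:ℝ)..q, ρ η / (1 - η) :=
    intervalIntegral.integral_add_adjacent_intervals (hsub2 0 r h0m hrm) (hsub2 r q hrm hqm)
  -- the difference as one integral
  have hdiff : e q - e r
      = (1 - r) * (∫ η in r..q, ρ η / (1 - η)) - r * (∫ η in r..q, ρ η / η) := by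
    have hrev : (∫ η in q..r, ρ η / η) = -∫ η in r..q, ρ η / η :=
      intervalIntegral.integral_symm r q
    rw [he q, he r, ← add1, ← add2, hrev]
    ring
  have key : 0 ≤ (1 - r) * (∫ η in r..q, ρ η / (1 - η)) - r * (∫ η in r..q, ρ η / η) := by
    set g : ℝ → ℝ := fun η => (1 - r) * (ρ η / (1 - η)) - r * (ρ η / η) with hg
    have hgint : ∀ a b : ℝ, a ∈ Set.Icc (0:ℝ) 1 → b ∈ Set.Icc (0:ℝ) 1 →
        IntervalIntegrable g volume a b := fun a b ha hb =>
      ((hsub2 a b ha hb).const_mul _).sub ((hsub1 a b ha hb).const_mul _)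
    have hGeq : ∀ a b : ℝ, a ∈ Set.Icc (0:ℝ) 1 → b ∈ Set.Icc (0:ℝ) 1 →
        (∫ η in a..b, g η)
        = (1 - r) * (∫ η in a..b, ρ η / (1 - η)) - r * (∫ η in a..b, ρ η / η) := by
      intro a b ha hb
      rw [intervalIntegral.integral_sub ((hsub2 a b ha hb).const_mul _)
        ((hsub1 a b ha hb).const_mul _),
        intervalIntegral.integral_const_mul, intervalIntegral.integral_const_mul]
    have hae : ∀ᵐ x : ℝ ∂volume, x ≠ 0 ∧ x ≠ 1 := by
      have : volume ({0, 1} : Set ℝ) = 0 := by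
        rw [Set.insert_eq]
        exact measure_union_null (measure_singleton 0) (measure_singleton 1)
      filter_upwards [measure_eq_zero_iff_ae_notMem.1 this] with x hx
      simp only [Set.mem_insert_iff, Set.mem_singleton_iff, not_or] at hx
      exact hx
    rcases le_total r q with hle | hle
    · rw [← hGeq r q hrm hqm]
      apply intervalIntegral.integral_nonneg_of_ae_restrict hle
      rw [Filter.EventuallyLE, ae_restrict_iff' measurableSet_Icc]
      filter_upwards [hae] with x hx hxm
      obtain ⟨hx0, hx1⟩ := hx
      obtain ⟨hxr, hxq⟩ := hxm
      have hxpos : 0 < x := lt_of_le_of_ne (hr0.trans hxr) (Ne.symm hx0)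
      have hxlt : x < 1 := lt_of_le_of_ne (hxq.trans hq1) hx1
      have hρx : 0 ≤ ρ x := hρ x ⟨hxpos.le, hxlt.le⟩
      have hdiv : r / x ≤ (1 - r) / (1 - x) := by
        rw [div_le_div_iff₀ hxpos (by linarith)]
        nlinarith
      have h := mul_le_mul_of_nonneg_right hdiv hρx
      have e1 : r / x * ρ x = r * (ρ x / x) := by ring
      have e2 : (1 - r) / (1 - x) * ρ x = (1 - r) * (ρ x / (1 - x)) := by ring
      simp only [hg, Pi.zero_apply]
      linarith
    · have hrev : (∫ η in r..q, g η) = -∫ η in q..r, g η :=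
        intervalIntegral.integral_symm q r
      rw [← hGeq r q hrm hqm, hrev, neg_nonneg]
      have : (∫ η in q..r, g η) ≤ ∫ η in q..r, (0:ℝ) := by
        apply intervalIntegral.integral_mono_ae_restrict hle (hgint q r hqm hrm)
          intervalIntegrable_const
        rw [Filter.EventuallyLE, ae_restrict_iff' measurableSet_Icc]
        filter_upwards [hae] with x hx hxm
        obtain ⟨hx0, hx1⟩ := hx
        obtain ⟨hxq, hxr⟩ := hxm
        have hxpos : 0 < x := lt_of_le_of_ne (hq0.trans hxq) (Ne.symm hx0)
        have hxlt : x < 1 := lt_of_le_of_ne (hxr.trans hr1) hx1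
        have hρx : 0 ≤ ρ x := hρ x ⟨hxpos.le, hxlt.le⟩
        have hdiv : (1 - r) / (1 - x) ≤ r / x := by
          rw [div_le_div_iff₀ (by linarith) hxpos]
          nlinarith
        have h := mul_le_mul_of_nonneg_right hdiv hρx
        have e1 : r / x * ρ x = r * (ρ x / x) := by ring
        have e2 : (1 - r) / (1 - x) * ρ x = (1 - r) * (ρ x / (1 - x)) := by ring
        simp only [hg, Pi.zero_apply]
        linarith
      simpa using this
  linarith
end

section
/- Let T ≥ 1, let labels ℓ₁,…,ℓ_T ∈ {H₁,H₂}, weights v₁,v₂ > 0, and for i ≤ j let m_{i,j} and n_{i,j} be the counts of H₁- and H₂-labels among ℓ_i,…,ℓ_j, with r_{i,j} = m_{i,j}v₁/(m_{i,j}v₁ + n_{i,j}v₂). Then for every t, max_{1≤i≤t} min_{t≤j≤T} r_{i,j} = min_{t≤j≤T} max_{1≤i≤t} r_{i,j}. -/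
/-- The weighted proportion `r_{i,j}` of `H₁`-labels (`true`) in positions `i..j`. -/
noncomputable def pavr {T : ℕ} (ℓ : Fin T → Bool) (v₁ v₂ : ℝ) (i j : Fin T) : ℝ :=
  (((Finset.Icc i j).filter fun k => ℓ k = true).card * v₁) /
    (((Finset.Icc i j).filter fun k => ℓ k = true).card * v₁ +
     ((Finset.Icc i j).filter fun k => ℓ k = false).card * v₂)

/-- Max-min equals min-max in the closed-form PAV solution (Ayer et al. 1955):
for every `t`, `max_{i ≤ t} min_{j ≥ t} r_{i,j} = min_{j ≥ t} max_{i ≤ t} r_{i,j}`. -/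
theorem stmt10 (T : ℕ) (hT : 1 ≤ T) (ℓ : Fin T → Bool) (v₁ v₂ : ℝ)
    (hv₁ : 0 < v₁) (hv₂ : 0 < v₂) (t : Fin T) :
    (Finset.Iic t).sup' Finset.nonempty_Iic
        (fun i => (Finset.Ici t).inf' Finset.nonempty_Ici fun j => pavr ℓ v₁ v₂ i j)
      = (Finset.Ici t).inf' Finset.nonempty_Ici
        (fun j => (Finset.Iic t).sup' Finset.nonempty_Iic fun i => pavr ℓ v₁ v₂ i j) := by
  classical
  set m : Fin T → Fin T → ℕ :=
    fun i j => ((Finset.Icc i j).filter fun k => ℓ k = true).card with hm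
  set n : Fin T → Fin T → ℕ :=
    fun i j => ((Finset.Icc i j).filter fun k => ℓ k = false).card with hn
  have hpavr : ∀ i j, pavr ℓ v₁ v₂ i j
      = ((m i j : ℝ) * v₁) / ((m i j : ℝ) * v₁ + (n i j : ℝ) * v₂) := fun i j => rfl
  have hden : ∀ i j : Fin T, i ≤ j → 0 < (m i j : ℝ) * v₁ + (n i j : ℝ) * v₂ := by
    intro i j hij
    have hcard : m i j + n i j = (Finset.Icc i j).card := by
      rw [hm, hn]
      have : ∀ k : Fin T, (ℓ k = false) = ¬(ℓ k = true) := by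
        intro k; simp
      simp only [this]
      exact Finset.card_filter_add_card_filter_not _
    have hpos : 0 < m i j + n i j := by
      rw [hcard]
      exact Finset.card_pos.mpr ⟨j, Finset.mem_Icc.mpr ⟨hij, le_refl j⟩⟩
    rcases Nat.eq_zero_or_pos (m i j) with h0 | h1
    · have hn1 : 1 ≤ n i j := by omega
      have h1 : (1 : ℝ) ≤ (n i j : ℝ) := by exact_mod_cast hn1
      nlinarith [mul_nonneg (Nat.cast_nonneg (m i j) : (0:ℝ) ≤ m i j) hv₁.le]
    · have h1' : (1 : ℝ) ≤ (m i j : ℝ) := by exact_mod_cast h1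
      nlinarith [mul_nonneg (Nat.cast_nonneg (n i j) : (0:ℝ) ≤ n i j) hv₂.le]
  -- additivity of counts when splitting at t
  have haddc : ∀ (b : Bool) (i j : Fin T), i ≤ t → t ≤ j →
      ((Finset.Icc i j).filter fun k => ℓ k = b).card
        + ((Finset.Icc t t).filter fun k => ℓ k = b).card
      = ((Finset.Icc i t).filter fun k => ℓ k = b).card
        + ((Finset.Icc t j).filter fun k => ℓ k = b).card := by
    intro b i j hit htj
    have hit' : i.val ≤ t.val := hit
    have htj' : t.val ≤ j.val := htj
    have hu : Finset.Icc i t ∪ Finset.Icc t j = Finset.Icc i j := by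
      ext k
      simp only [Finset.mem_union, Finset.mem_Icc, Fin.le_def]
      omega
    have hi2 : Finset.Icc i t ∩ Finset.Icc t j = Finset.Icc t t := by
      ext k
      simp only [Finset.mem_inter, Finset.mem_Icc, Fin.le_def]
      omega
    rw [← hu, ← hi2, Finset.filter_union, Finset.filter_inter_distrib]
    exact Finset.card_union_add_card_inter _ _
  apply le_antisymm
  · exact Finset.sup'_le _ _ fun i hi => Finset.le_inf' _ _ fun j hj =>
      le_trans (Finset.inf'_le _ hj) (Finset.le_sup' (fun i => pavr ℓ v₁ v₂ i j) hi)
  · set V := (Finset.Ici t).inf' Finset.nonempty_Ici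
      (fun j => (Finset.Iic t).sup' Finset.nonempty_Iic fun i => pavr ℓ v₁ v₂ i j) with hV
    set L : Fin T → Fin T → ℝ :=
      fun i j => (1 - V) * (m i j : ℝ) * v₁ - V * (n i j : ℝ) * v₂ with hL
    have hB : ∀ i j : Fin T, i ≤ j → (V ≤ pavr ℓ v₁ v₂ i j ↔ 0 ≤ L i j) := by
      intro i j hij
      rw [hpavr, le_div_iff₀ (hden i j hij)]
      simp only [hL]
      constructor <;> intro h <;> nlinarith
    have hLadd : ∀ i j : Fin T, i ≤ t → t ≤ j → L i j + L t t = L i t + L t j := by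
      intro i j hit htj
      have em : (m i j : ℝ) + (m t t : ℝ) = (m i t : ℝ) + (m t j : ℝ) := by
        exact_mod_cast congrArg (Nat.cast : ℕ → ℝ) (haddc true i j hit htj)
      have en : (n i j : ℝ) + (n t t : ℝ) = (n i t : ℝ) + (n t j : ℝ) := by
        exact_mod_cast congrArg (Nat.cast : ℕ → ℝ) (haddc false i j hit htj)
      simp only [hL]
      linear_combination (1 - V) * v₁ * em - V * v₂ * en
    obtain ⟨j0, hj0mem, hj0min⟩ :=
      Finset.exists_min_image (Finset.Ici t) (fun j => L t j) Finset.nonempty_Ici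
    have htj0 : t ≤ j0 := Finset.mem_Ici.mp hj0mem
    have hVsup : V ≤ (Finset.Iic t).sup' Finset.nonempty_Iic
        fun i => pavr ℓ v₁ v₂ i j0 := Finset.inf'_le _ hj0mem
    obtain ⟨i0, hi0mem, hi0⟩ := (Finset.le_sup'_iff Finset.nonempty_Iic).mp hVsup
    have hi0t : i0 ≤ t := Finset.mem_Iic.mp hi0mem
    refine le_trans ?_ (Finset.le_sup'
      (fun i => (Finset.Ici t).inf' Finset.nonempty_Ici fun j => pavr ℓ v₁ v₂ i j) hi0mem)
    apply Finset.le_inf'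
    intro j hj
    have htj : t ≤ j := Finset.mem_Ici.mp hj
    rw [hB i0 j (le_trans hi0t htj)]
    have h1 : 0 ≤ L i0 j0 := (hB i0 j0 (le_trans hi0t htj0)).mp hi0
    have h2 := hj0min j hj
    have e1 := hLadd i0 j0 hi0t htj0
    have e2 := hLadd i0 j hi0t htj
    linarith
end

section
/- Let labels ℓ₁,…,ℓ_T ∈ {H₁,H₂}, weights v₁,v₂ > 0, and define p_t = max_{1≤i≤t} min_{t≤j≤T} r_{i,j} where r_{i,j} = m_{i,j}v₁/(m_{i,j}v₁ + n_{i,j}v₂) with m_{i,j}, n_{i,j} the counts of H₁, H₂ labels in positions i through j. Then the sequence (p_t) is monotone nondecreasing: p₁ ≤ p₂ ≤ ⋯ ≤ p_T, and 0 ≤ p_t ≤ 1 for all t. -/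
lemma pavr_nonneg {T : ℕ} (ℓ : Fin T → Bool) (v₁ v₂ : ℝ)
    (hv₁ : 0 < v₁) (hv₂ : 0 < v₂) (i j : Fin T) : 0 ≤ pavr ℓ v₁ v₂ i j := by
  unfold pavr
  apply div_nonneg <;> positivity

lemma pavr_le_one {T : ℕ} (ℓ : Fin T → Bool) (v₁ v₂ : ℝ)
    (hv₁ : 0 < v₁) (hv₂ : 0 < v₂) (i j : Fin T) : pavr ℓ v₁ v₂ i j ≤ 1 := by
  unfold pavr
  apply div_le_one_of_le₀
  · nlinarith [Nat.cast_nonneg (α := ℝ) ((Finset.Icc i j).filter fun k => ℓ k = false).card]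
  · positivity

/-- The closed-form PAV solution `p_t = max_{i ≤ t} min_{j ≥ t} r_{i,j}` is monotone
nondecreasing in `t` and takes values in `[0,1]`. -/
theorem stmt11 (T : ℕ) (hT : 1 ≤ T) (ℓ : Fin T → Bool) (v₁ v₂ : ℝ)
    (hv₁ : 0 < v₁) (hv₂ : 0 < v₂) :
    Monotone (fun t : Fin T => (Finset.Iic t).sup' Finset.nonempty_Iic
        fun i => (Finset.Ici t).inf' Finset.nonempty_Ici fun j => pavr ℓ v₁ v₂ i j) ∧
    ∀ t : Fin T,
      0 ≤ ((Finset.Iic t).sup' Finset.nonempty_Iic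
        fun i => (Finset.Ici t).inf' Finset.nonempty_Ici fun j => pavr ℓ v₁ v₂ i j) ∧
      ((Finset.Iic t).sup' Finset.nonempty_Iic
        fun i => (Finset.Ici t).inf' Finset.nonempty_Ici fun j => pavr ℓ v₁ v₂ i j) ≤ 1 := by
  constructor
  · intro s t hst
    simp only
    apply Finset.sup'_le
    intro i hi
    have hi' : i ∈ Finset.Iic t := by
      simp only [Finset.mem_Iic] at *; exact le_trans hi hst
    refine le_trans ?_ (Finset.le_sup' _ hi')
    apply Finset.inf'_mono
    intro j hj
    simp only [Finset.mem_Ici] at *; exact le_trans hst hj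
  · intro t
    constructor
    · refine le_trans ?_ (Finset.le_sup' _ (Finset.mem_Iic.2 (le_refl t)))
      apply Finset.le_inf'
      intro j hj
      exact pavr_nonneg ℓ v₁ v₂ hv₁ hv₂ t j
    · apply Finset.sup'_le
      intro i hi
      refine le_trans (Finset.inf'_le _ (Finset.mem_Ici.2 (le_refl t))) ?_
      exact pavr_le_one ℓ v₁ v₂ hv₁ hv₂ i t
end

section
/- Let labels ℓ₁,…,ℓ_T, weights v₁,v₂ > 0, and suppose the constant solution p_i = ⋯ = p_j = r_{i,j} minimizes Obj_{i,j}(q) = m_{i,j}v₁·C(H₁,q) + n_{i,j}v₂·C(H₂,q) over monotone solutions for every strict RBPSR C. Then for every k with i ≤ k ≤ j: r_{i,k} ≥ r_{i,j} and r_{k,j} ≤ r_{i,j}. -/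
open MeasureTheory

/-- The RBPSR with density `ρ`: `C(H₁,q) = ∫_q^1 ρ(η)/η dη` (label `true`),
`C(H₂,q) = ∫_0^q ρ(η)/(1-η) dη` (label `false`). -/
noncomputable def Crho (ρ : ℝ → ℝ) : Bool → ℝ → ℝ
  | true,  q => ∫ η in q..1, ρ η / η
  | false, q => ∫ η in (0:ℝ)..q, ρ η / (1 - η)

/-- The weighted proportion `r_{i,j}` of `H₁`-labels (`true`) in positions `i..j`. -/
noncomputable def pavrN (ℓ : ℕ → Bool) (v₁ v₂ : ℝ) (i j : ℕ) : ℝ :=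
  (((Finset.Icc i j).filter fun k => ℓ k = true).card * v₁) /
    (((Finset.Icc i j).filter fun k => ℓ k = true).card * v₁ +
     ((Finset.Icc i j).filter fun k => ℓ k = false).card * v₂)

/-! Specialise the hypothesis to the Brier rule `ρ(η) = 6η(1-η)`, for which
`C(H₁,q) = 3(1-q)²` and `C(H₂,q) = 3q²`. The objective of a constant `q` on a block is then
`3(m v₁ (1-q)² + n v₂ q²)`, strictly minimised at the block's own `r`. If `r_{i,k} < r_{i,j}`,
lowering `p` on `i..k` to `r_{i,k}` keeps it monotone and strictly decreases the objective;
symmetrically, if `r_{k,j} > r_{i,j}`, raising `p` on `k..j` to `r_{k,j}` does. -/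

noncomputable def brierDensity (η : ℝ) : ℝ := 6 * η * (1 - η)

lemma brierDensity_nonneg {η : ℝ} (hη : η ∈ Set.Icc (0:ℝ) 1) : 0 ≤ brierDensity η :=
  mul_nonneg (by linarith [hη.1]) (by linarith [hη.2])

lemma ae_restrict_Icc_brierDensity_pos :
    ∀ᵐ η ∂(volume.restrict (Set.Icc (0:ℝ) 1)), 0 < brierDensity η := by
  refine (ae_restrict_iff' measurableSet_Icc).2 ?_
  filter_upwards [volume.ae_ne 0, volume.ae_ne 1] with η h0 h1 hη
  exact mul_pos (by linarith [lt_of_le_of_ne hη.1 h0.symm]) (by linarith [lt_of_le_of_ne hη.2 h1])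

lemma integral_brierDensity : ∫ η in (0:ℝ)..1, brierDensity η = 1 := by
  have : brierDensity = fun η => 6 * η - 6 * η ^ 2 := by funext; rw [brierDensity]; ring
  rw [this, intervalIntegral.integral_sub (Continuous.intervalIntegrable (by fun_prop) _ _)
    (Continuous.intervalIntegrable (by fun_prop) _ _), intervalIntegral.integral_const_mul,
    intervalIntegral.integral_const_mul, integral_id, integral_pow]
  norm_num

lemma brierDensity_div_self : (fun η => brierDensity η / η) =ᵐ[volume] fun η => 6 * (1 - η) := by
  filter_upwards [volume.ae_ne 0] with η hη
  rw [div_eq_iff hη, brierDensity]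
  ring

lemma brierDensity_div_one_sub :
    (fun η => brierDensity η / (1 - η)) =ᵐ[volume] fun η => 6 * η := by
  filter_upwards [volume.ae_ne 1] with η hη
  rw [div_eq_iff (sub_ne_zero.2 hη.symm), brierDensity]

lemma intervalIntegrable_brierDensity_div_self :
    IntervalIntegrable (fun η => brierDensity η / η) volume 0 1 :=
  (Continuous.intervalIntegrable (by fun_prop) _ _).congr_ae
    (ae_restrict_of_ae brierDensity_div_self.symm)

lemma intervalIntegrable_brierDensity_div_one_sub :
    IntervalIntegrable (fun η => brierDensity η / (1 - η)) volume 0 1 :=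
  (Continuous.intervalIntegrable (by fun_prop) _ _).congr_ae
    (ae_restrict_of_ae brierDensity_div_one_sub.symm)

lemma Crho_brierDensity_true (q : ℝ) : Crho brierDensity true q = 3 * (1 - q) ^ 2 := by
  rw [Crho, intervalIntegral.integral_congr_ae (brierDensity_div_self.mono fun _ h _ => h),
    intervalIntegral.integral_const_mul, intervalIntegral.integral_comp_sub_left (fun x => x),
    sub_self, integral_id]
  ring

lemma Crho_brierDensity_false (q : ℝ) : Crho brierDensity false q = 3 * q ^ 2 := by
  rw [Crho, intervalIntegral.integral_congr_ae (brierDensity_div_one_sub.mono fun _ h _ => h),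
    intervalIntegral.integral_const_mul, integral_id]
  ring

/-- The paper's `Obj_{i,j}(p)` for `S = [i, j]`, at a not necessarily constant `p`. -/
noncomputable def objective (ρ : ℝ → ℝ) (ℓ : ℕ → Bool) (v₁ v₂ : ℝ) (S : Finset ℕ)
    (p : ℕ → ℝ) : ℝ :=
  ∑ t ∈ S, (if ℓ t then v₁ else v₂) * Crho ρ (ℓ t) (p t)

lemma objective_step (ρ : ℝ → ℝ) (ℓ : ℕ → Bool) (v₁ v₂ : ℝ) (S : Finset ℕ) (c : ℕ) (a b : ℝ) :
    objective ρ ℓ v₁ v₂ S (fun t => if t < c then a else b) =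
      objective ρ ℓ v₁ v₂ (S.filter (· < c)) (fun _ => a) +
        objective ρ ℓ v₁ v₂ (S.filter (¬ · < c)) (fun _ => b) := by
  rw [objective, ← Finset.sum_filter_add_sum_filter_not S (· < c)]
  congr 1 <;> refine Finset.sum_congr rfl fun t ht => ?_ <;>
    simp only [(Finset.mem_filter.1 ht).2, if_true, if_false]

lemma objective_brierDensity_const (ℓ : ℕ → Bool) (v₁ v₂ : ℝ) (S : Finset ℕ) (q : ℝ) :
    objective brierDensity ℓ v₁ v₂ S (fun _ => q) =
      3 * ((S.filter fun k => ℓ k = true).card * v₁ * (1 - q) ^ 2 +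
        (S.filter fun k => ℓ k = false).card * v₂ * q ^ 2) := by
  have hsummand : ∀ t ∈ S, (if ℓ t then v₁ else v₂) * Crho brierDensity (ℓ t) q =
      if ℓ t = true then v₁ * (3 * (1 - q) ^ 2) else v₂ * (3 * q ^ 2) := by
    intro t _
    cases ℓ t <;> simp [Crho_brierDensity_true, Crho_brierDensity_false]
  rw [objective, Finset.sum_congr rfl hsummand, Finset.sum_ite, Finset.sum_const,
    Finset.sum_const]
  simp only [Bool.not_eq_true, nsmul_eq_mul]
  ring

lemma pavrN_mem_Icc (ℓ : ℕ → Bool) {v₁ v₂ : ℝ} (hv₁ : 0 ≤ v₁) (hv₂ : 0 ≤ v₂) (a b : ℕ) :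
    pavrN ℓ v₁ v₂ a b ∈ Set.Icc (0:ℝ) 1 := by
  have hM : 0 ≤ ((Finset.Icc a b).filter fun k => ℓ k = true).card * v₁ := by positivity
  have hN : 0 ≤ ((Finset.Icc a b).filter fun k => ℓ k = false).card * v₂ := by positivity
  exact ⟨div_nonneg hM (add_nonneg hM hN),
    div_le_one_of_le₀ (le_add_of_nonneg_right hN) (add_nonneg hM hN)⟩

lemma objective_brierDensity_pavrN_lt (ℓ : ℕ → Bool) {v₁ v₂ : ℝ} (hv₁ : 0 < v₁) (hv₂ : 0 < v₂)
    {a b : ℕ} (hab : a ≤ b) {q : ℝ} (hq : q ≠ pavrN ℓ v₁ v₂ a b) :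
    objective brierDensity ℓ v₁ v₂ (Finset.Icc a b) (fun _ => pavrN ℓ v₁ v₂ a b) <
      objective brierDensity ℓ v₁ v₂ (Finset.Icc a b) (fun _ => q) := by
  rw [objective_brierDensity_const, objective_brierDensity_const]
  unfold pavrN at hq ⊢
  set M := ((Finset.Icc a b).filter fun k => ℓ k = true).card * v₁
  set N := ((Finset.Icc a b).filter fun k => ℓ k = false).card * v₂
  set r := M / (M + N)
  have hpos : 0 < M + N := by
    have ha : a ∈ Finset.Icc a b := Finset.mem_Icc.2 ⟨le_rfl, hab⟩
    cases h : ℓ a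
    · have : 0 < ((Finset.Icc a b).filter fun k => ℓ k = false).card :=
        Finset.card_pos.2 ⟨a, Finset.mem_filter.2 ⟨ha, h⟩⟩
      have : 0 < N := by positivity
      positivity
    · have : 0 < ((Finset.Icc a b).filter fun k => ℓ k = true).card :=
        Finset.card_pos.2 ⟨a, Finset.mem_filter.2 ⟨ha, h⟩⟩
      have : 0 < M := by positivity
      positivity
  have hr : r * (M + N) = M := div_mul_cancel₀ M hpos.ne'
  have hgap : 0 < (M + N) * (q - r) ^ 2 := mul_pos hpos (sq_pos_of_ne_zero (sub_ne_zero.2 hq))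
  -- expanding around `r`, the linear term vanishes because `r (M + N) = M`
  linear_combination 3 * hgap - 6 * (q - r) * hr

lemma objective_const_le_step {ρ : ℝ → ℝ} {ℓ : ℕ → Bool} {v₁ v₂ : ℝ} {i j : ℕ} {r : ℝ}
    (hopt : ∀ p : ℕ → ℝ, MonotoneOn p (Set.Icc i j) →
      (∀ t ∈ Set.Icc i j, p t ∈ Set.Icc (0:ℝ) 1) →
      objective ρ ℓ v₁ v₂ (Finset.Icc i j) (fun _ => r) ≤ objective ρ ℓ v₁ v₂ (Finset.Icc i j) p)
    (c : ℕ) {a b : ℝ} (hab : a ≤ b) (ha : a ∈ Set.Icc (0:ℝ) 1) (hb : b ∈ Set.Icc (0:ℝ) 1) :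
    objective ρ ℓ v₁ v₂ ((Finset.Icc i j).filter (· < c)) (fun _ => r) +
        objective ρ ℓ v₁ v₂ ((Finset.Icc i j).filter (¬ · < c)) (fun _ => r) ≤
      objective ρ ℓ v₁ v₂ ((Finset.Icc i j).filter (· < c)) (fun _ => a) +
        objective ρ ℓ v₁ v₂ ((Finset.Icc i j).filter (¬ · < c)) (fun _ => b) := by
  have hmono : Monotone fun t : ℕ => if t < c then a else b := by
    intro s t hst
    dsimp only
    split_ifs <;> first | exact le_rfl | exact hab | omega
  have hconst := objective_step ρ ℓ v₁ v₂ (Finset.Icc i j) c r r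
  simp only [ite_self] at hconst
  rw [← hconst, ← objective_step]
  exact hopt _ (hmono.monotoneOn _) fun t _ => by split_ifs <;> assumption

theorem stmt13_general (ℓ : ℕ → Bool) (v₁ v₂ : ℝ) (hv₁ : 0 < v₁) (hv₂ : 0 < v₂)
    (i j : ℕ)
    (hopt : ∀ ρ : ℝ → ℝ,
      (∀ η ∈ Set.Icc (0:ℝ) 1, 0 ≤ ρ η) →
      (∀ᵐ η ∂(volume.restrict (Set.Icc (0:ℝ) 1)), 0 < ρ η) →
      (∫ η in (0:ℝ)..1, ρ η) = 1 →
      IntervalIntegrable (fun η => ρ η / η) volume 0 1 →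
      IntervalIntegrable (fun η => ρ η / (1 - η)) volume 0 1 →
      ∀ p : ℕ → ℝ, MonotoneOn p (Set.Icc i j) →
        (∀ t ∈ Set.Icc i j, p t ∈ Set.Icc (0:ℝ) 1) →
        (∑ t ∈ Finset.Icc i j,
            (if ℓ t then v₁ else v₂) * Crho ρ (ℓ t) (pavrN ℓ v₁ v₂ i j)) ≤
          ∑ t ∈ Finset.Icc i j, (if ℓ t then v₁ else v₂) * Crho ρ (ℓ t) (p t)) :
    ∀ k, i ≤ k → k ≤ j →
      pavrN ℓ v₁ v₂ i j ≤ pavrN ℓ v₁ v₂ i k ∧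
      pavrN ℓ v₁ v₂ k j ≤ pavrN ℓ v₁ v₂ i j := by
  intro k hik hkj
  have hbrier := hopt brierDensity (fun _ => brierDensity_nonneg)
    ae_restrict_Icc_brierDensity_pos integral_brierDensity
    intervalIntegrable_brierDensity_div_self intervalIntegrable_brierDensity_div_one_sub
  have hr := pavrN_mem_Icc ℓ hv₁.le hv₂.le i j
  constructor
  · by_contra! hlt
    have hstep := objective_const_le_step hbrier (k + 1) hlt.le
      (pavrN_mem_Icc ℓ hv₁.le hv₂.le i k) hr
    have hprefix : (Finset.Icc i j).filter (· < k + 1) = Finset.Icc i k := by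
      ext t; simp only [Finset.mem_filter, Finset.mem_Icc]; omega
    rw [hprefix] at hstep
    have := objective_brierDensity_pavrN_lt ℓ hv₁ hv₂ hik hlt.ne'
    linarith
  · by_contra! hlt
    have hstep := objective_const_le_step hbrier k hlt.le hr (pavrN_mem_Icc ℓ hv₁.le hv₂.le k j)
    have hsuffix : (Finset.Icc i j).filter (¬ · < k) = Finset.Icc k j := by
      ext t; simp only [Finset.mem_filter, Finset.mem_Icc]; omega
    rw [hsuffix] at hstep
    have := objective_brierDensity_pavrN_lt ℓ hv₁ hv₂ hkj hlt.ne
    linarith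

/-- Theorem 2: if the constant solution at `r_{i,j}` minimizes the subproblem objective
over monotone `[0,1]`-valued solutions for every strict RBPSR, then for every
`i ≤ k ≤ j` we have `r_{i,k} ≥ r_{i,j}` and `r_{k,j} ≤ r_{i,j}`. -/
theorem stmt13 (ℓ : ℕ → Bool) (v₁ v₂ : ℝ) (hv₁ : 0 < v₁) (hv₂ : 0 < v₂)
    (i j : ℕ) (hij : i ≤ j)
    (hopt : ∀ ρ : ℝ → ℝ,
      (∀ η ∈ Set.Icc (0:ℝ) 1, 0 ≤ ρ η) →
      (∀ᵐ η ∂(volume.restrict (Set.Icc (0:ℝ) 1)), 0 < ρ η) →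
      (∫ η in (0:ℝ)..1, ρ η) = 1 →
      IntervalIntegrable (fun η => ρ η / η) volume 0 1 →
      IntervalIntegrable (fun η => ρ η / (1 - η)) volume 0 1 →
      ∀ p : ℕ → ℝ, MonotoneOn p (Set.Icc i j) →
        (∀ t ∈ Set.Icc i j, p t ∈ Set.Icc (0:ℝ) 1) →
        (∑ t ∈ Finset.Icc i j,
            (if ℓ t then v₁ else v₂) * Crho ρ (ℓ t) (pavrN ℓ v₁ v₂ i j)) ≤
          ∑ t ∈ Finset.Icc i j, (if ℓ t then v₁ else v₂) * Crho ρ (ℓ t) (p t)) :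
    ∀ k, i ≤ k → k ≤ j →
      pavrN ℓ v₁ v₂ i j ≤ pavrN ℓ v₁ v₂ i k ∧
      pavrN ℓ v₁ v₂ k j ≤ pavrN ℓ v₁ v₂ i j :=
  stmt13_general ℓ v₁ v₂ hv₁ hv₂ i j hopt
end

section
/- Let r₁ > r₂ be two values in [0,1], and for a density ρ ≥ 0 on [0,1] with associated RBPSR C, consider minimizing F(α) = m₁v₁C(H₁,α) + n₁v₂C(H₂,α) + m₂v₁C(H₁,β) + n₂v₂C(H₂,β) over α ≤ β, where r₁ = m₁v₁/(m₁v₁+n₁v₂) and r₂ = m₂v₁/(m₂v₂+n₂v₂) would be the unconstrained minimizers of the two summands. Then any minimizer satisfies α = β, i.e., when the unconstrained optima violate the order constraint, the constrained optimum pools the two blocks at a common value. -/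
open MeasureTheory


private lemma aux_S_pos (m n : ℕ) (v₁ v₂ : ℝ) (hv₁ : 0 < v₁) (hv₂ : 0 < v₂)
    (h : 0 < m + n) : 0 < (m:ℝ) * v₁ + n * v₂ := by
  rcases Nat.eq_zero_or_pos m with hm | hm
  · have hn : 0 < n := by omega
    have : (0:ℝ) < n * v₂ := mul_pos (by exact_mod_cast hn) hv₂
    have : (0:ℝ) ≤ m * v₁ := by positivity
    nlinarith
  · have : (0:ℝ) < m * v₁ := mul_pos (by exact_mod_cast hm) hv₁
    have : (0:ℝ) ≤ n * v₂ := by positivity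
    nlinarith

private lemma aux_int_pos {f : ℝ → ℝ} {a b : ℝ} (hab : a < b)
    (hf : IntervalIntegrable f volume a b)
    (hpos : ∀ᵐ x ∂(volume.restrict (Set.Ioc a b)), 0 < f x) :
    0 < ∫ x in a..b, f x := by
  rw [intervalIntegral.integral_of_le hab.le]
  have hint : Integrable f (volume.restrict (Set.Ioc a b)) := hf.1
  rw [integral_pos_iff_support_of_nonneg_ae (hpos.mono fun x h => h.le) hint]
  have hsupp : ∀ᵐ x ∂(volume.restrict (Set.Ioc a b)), x ∈ Function.support f :=
    hpos.mono fun x h => Function.mem_support.2 h.ne'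
  have h0 : (volume.restrict (Set.Ioc a b)) (Function.support f)ᶜ = 0 := hsupp
  have huniv : (volume.restrict (Set.Ioc a b)) Set.univ =
      ENNReal.ofReal (b - a) := by
    rw [Measure.restrict_apply_univ, Real.volume_Ioc]
  have hle : (volume.restrict (Set.Ioc a b)) Set.univ ≤
      (volume.restrict (Set.Ioc a b)) (Function.support f) +
      (volume.restrict (Set.Ioc a b)) (Function.support f)ᶜ := by
    rw [← Set.union_compl_self (Function.support f)]
    exact measure_union_le _ _
  rw [h0, add_zero, huniv] at hle
  exact lt_of_lt_of_le (ENNReal.ofReal_pos.2 (sub_pos.2 hab)) hle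

/-- Theorem 3 core pooling step, two-block form: if the unconstrained block optima
`r₁ > r₂` violate the order constraint, then under the constraint `α ≤ β` any minimizer
of the combined objective pools the two blocks: `α = β`. (Strict RBPSR: `ρ > 0` a.e.) -/
theorem stmt14 (m₁ n₁ m₂ n₂ : ℕ) (v₁ v₂ : ℝ) (hv₁ : 0 < v₁) (hv₂ : 0 < v₂)
    (hA : 0 < m₁ + n₁) (hB : 0 < m₂ + n₂)
    (ρ : ℝ → ℝ)
    (hρ : ∀ η ∈ Set.Icc (0:ℝ) 1, 0 ≤ ρ η)
    (hpos : ∀ᵐ η ∂(volume.restrict (Set.Icc (0:ℝ) 1)), 0 < ρ η)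
    (hnorm : (∫ η in (0:ℝ)..1, ρ η) = 1)
    (hint1 : IntervalIntegrable (fun η => ρ η / η) volume 0 1)
    (hint2 : IntervalIntegrable (fun η => ρ η / (1 - η)) volume 0 1)
    (r₁ r₂ : ℝ)
    (hr₁ : r₁ = (m₁ * v₁) / (m₁ * v₁ + n₁ * v₂))
    (hr₂ : r₂ = (m₂ * v₁) / (m₂ * v₁ + n₂ * v₂))
    (horder : r₂ < r₁)
    (F : ℝ → ℝ → ℝ)
    (hF : ∀ α β, F α β =
      m₁ * v₁ * (∫ η in α..1, ρ η / η) + n₁ * v₂ * (∫ η in (0:ℝ)..α, ρ η / (1 - η)) +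
      m₂ * v₁ * (∫ η in β..1, ρ η / η) + n₂ * v₂ * (∫ η in (0:ℝ)..β, ρ η / (1 - η)))
    (α β : ℝ) (hαβ : α ≤ β)
    (hα : α ∈ Set.Icc (0:ℝ) 1) (hβ : β ∈ Set.Icc (0:ℝ) 1)
    (hmin : ∀ α' β', α' ≤ β' → α' ∈ Set.Icc (0:ℝ) 1 → β' ∈ Set.Icc (0:ℝ) 1 →
      F α β ≤ F α' β') :
    α = β := by
  by_contra hne
  have hlt : α < β := lt_of_le_of_ne hαβ hne
  have hS₁pos : 0 < (m₁:ℝ) * v₁ + n₁ * v₂ := aux_S_pos m₁ n₁ v₁ v₂ hv₁ hv₂ hA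
  have hS₂pos : 0 < (m₂:ℝ) * v₁ + n₂ * v₂ := aux_S_pos m₂ n₂ v₁ v₂ hv₁ hv₂ hB
  have hr₂0 : 0 ≤ r₂ := by rw [hr₂]; positivity
  have hr₁1 : r₁ ≤ 1 := by
    rw [hr₁, div_le_one hS₁pos]
    nlinarith [Nat.cast_nonneg (α := ℝ) n₁]
  -- uIcc subset helper
  have hsub : ∀ a b : ℝ, a ∈ Set.Icc (0:ℝ) 1 → b ∈ Set.Icc (0:ℝ) 1 →
      Set.uIcc a b ⊆ Set.uIcc (0:ℝ) 1 := by
    intro a b ha hb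
    apply Set.uIcc_subset_uIcc <;> rw [Set.uIcc_of_le (zero_le_one)] <;> assumption
  by_cases hcase : β ≤ r₂
  · -- case 1: α < β ≤ r₂ < r₁; increase α to β strictly decreases F
    set g : ℝ → ℝ := fun η => m₁ * v₁ * (ρ η / η) - n₁ * v₂ * (ρ η / (1 - η)) with hg
    have hsubαβ := hsub α β hα hβ
    have hg_int : IntervalIntegrable g volume α β :=
      ((hint1.mono_set hsubαβ).const_mul _).sub ((hint2.mono_set hsubαβ).const_mul _)
    have hIocsub : Set.Ioc α β ⊆ Set.Icc (0:ℝ) 1 := fun x hx =>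
      ⟨hα.1.trans hx.1.le, hx.2.trans hβ.2⟩
    have hρ' : ∀ᵐ η ∂(volume.restrict (Set.Ioc α β)), 0 < ρ η :=
      hpos.filter_mono (ae_mono (Measure.restrict_mono hIocsub le_rfl))
    have hmem : ∀ᵐ η ∂(volume.restrict (Set.Ioc α β)), η ∈ Set.Ioc α β :=
      ae_restrict_mem measurableSet_Ioc
    have hgpos : ∀ᵐ η ∂(volume.restrict (Set.Ioc α β)), 0 < g η := by
      filter_upwards [hρ', hmem] with η hρη hη
      have hη0 : 0 < η := lt_of_le_of_lt hα.1 hη.1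
      have hηr : η < r₁ := lt_of_le_of_lt (hη.2.trans hcase) horder
      have hη1 : 0 < 1 - η := sub_pos.2 (lt_of_lt_of_le hηr hr₁1)
      have hkey : η * ((m₁:ℝ) * v₁ + n₁ * v₂) < m₁ * v₁ := by
        rw [hr₁] at hηr
        exact (lt_div_iff₀ hS₁pos).1 hηr
      have : (n₁:ℝ) * v₂ * (ρ η / (1 - η)) < m₁ * v₁ * (ρ η / η) := by
        rw [mul_div_assoc' (↑n₁ * v₂), mul_div_assoc' (↑m₁ * v₁),
          div_lt_div_iff₀ hη1 hη0]
        nlinarith [mul_lt_mul_of_pos_left hkey hρη]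
      simpa [hg] using sub_pos.2 this
    have hint_pos : 0 < ∫ η in α..β, g η := aux_int_pos hlt hg_int hgpos
    have hI : (∫ η in α..β, g η) =
        m₁ * v₁ * (∫ η in α..β, ρ η / η) - n₁ * v₂ * (∫ η in α..β, ρ η / (1 - η)) := by
      rw [hg]
      rw [intervalIntegral.integral_sub ((hint1.mono_set hsubαβ).const_mul _)
        ((hint2.mono_set hsubαβ).const_mul _),
        intervalIntegral.integral_const_mul, intervalIntegral.integral_const_mul]
    rw [hI] at hint_pos
    have hsplit1 : (∫ η in α..β, ρ η / η) + (∫ η in β..1, ρ η / η)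
        = ∫ η in α..1, ρ η / η :=
      intervalIntegral.integral_add_adjacent_intervals (hint1.mono_set hsubαβ)
        (hint1.mono_set (hsub β 1 hβ (by norm_num)))
    have hsplit2 : (∫ η in (0:ℝ)..α, ρ η / (1 - η)) + (∫ η in α..β, ρ η / (1 - η))
        = ∫ η in (0:ℝ)..β, ρ η / (1 - η) :=
      intervalIntegral.integral_add_adjacent_intervals
        (hint2.mono_set (hsub 0 α (by norm_num) hα)) (hint2.mono_set hsubαβ)
    have hFlt : F β β < F α β := by
      rw [hF, hF, ← hsplit1, ← hsplit2]
      nlinarith [hint_pos]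
    exact absurd (hmin β β le_rfl hβ hβ) (not_le.2 hFlt)
  · -- case 2: r₂ < β; decrease β to γ = max α r₂ strictly decreases F
    push_neg at hcase
    set γ : ℝ := max α r₂ with hγdef
    have hγβ : γ < β := max_lt hlt hcase
    have hγ : γ ∈ Set.Icc (0:ℝ) 1 :=
      ⟨le_trans hα.1 (le_max_left _ _), (hγβ.le.trans hβ.2)⟩
    have hαγ : α ≤ γ := le_max_left _ _
    set g : ℝ → ℝ := fun η => n₂ * v₂ * (ρ η / (1 - η)) - m₂ * v₁ * (ρ η / η) with hg
    have hsubγβ := hsub γ β hγ hβ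
    have hg_int : IntervalIntegrable g volume γ β :=
      ((hint2.mono_set hsubγβ).const_mul _).sub ((hint1.mono_set hsubγβ).const_mul _)
    have hIocsub : Set.Ioc γ β ⊆ Set.Icc (0:ℝ) 1 := fun x hx =>
      ⟨hγ.1.trans hx.1.le, hx.2.trans hβ.2⟩
    have hρ' : ∀ᵐ η ∂(volume.restrict (Set.Ioc γ β)), 0 < ρ η :=
      hpos.filter_mono (ae_mono (Measure.restrict_mono hIocsub le_rfl))
    have hmem : ∀ᵐ η ∂(volume.restrict (Set.Ioc γ β)), η ∈ Set.Ioc γ β :=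
      ae_restrict_mem measurableSet_Ioc
    have hne1 : ∀ᵐ η ∂(volume.restrict (Set.Ioc γ β)), η ≠ 1 := by
      have h1 : ∀ᵐ η : ℝ ∂volume, η ≠ 1 := by
        have : (volume : Measure ℝ) {(1:ℝ)} = 0 := measure_singleton 1
        filter_upwards [compl_mem_ae_iff.2 this] with x hx
        simpa using hx
      exact h1.filter_mono (ae_mono Measure.restrict_le_self)
    have hgpos : ∀ᵐ η ∂(volume.restrict (Set.Ioc γ β)), 0 < g η := by
      filter_upwards [hρ', hmem, hne1] with η hρη hη hη1'
      have hη0 : 0 < η := lt_of_le_of_lt hγ.1 hη.1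
      have hηr : r₂ < η := lt_of_le_of_lt (le_max_right α r₂) hη.1
      have hη1 : 0 < 1 - η := sub_pos.2 (lt_of_le_of_ne (hη.2.trans hβ.2) hη1')
      have hkey : (m₂:ℝ) * v₁ < η * ((m₂:ℝ) * v₁ + n₂ * v₂) := by
        rw [hr₂] at hηr
        exact (div_lt_iff₀ hS₂pos).1 hηr
      have : (m₂:ℝ) * v₁ * (ρ η / η) < n₂ * v₂ * (ρ η / (1 - η)) := by
        rw [mul_div_assoc' (↑m₂ * v₁), mul_div_assoc' (↑n₂ * v₂),
          div_lt_div_iff₀ hη0 hη1]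
        nlinarith [mul_lt_mul_of_pos_left hkey hρη]
      simpa [hg] using sub_pos.2 this
    have hint_pos : 0 < ∫ η in γ..β, g η := aux_int_pos hγβ hg_int hgpos
    have hI : (∫ η in γ..β, g η) =
        n₂ * v₂ * (∫ η in γ..β, ρ η / (1 - η)) - m₂ * v₁ * (∫ η in γ..β, ρ η / η) := by
      rw [hg]
      rw [intervalIntegral.integral_sub ((hint2.mono_set hsubγβ).const_mul _)
        ((hint1.mono_set hsubγβ).const_mul _),
        intervalIntegral.integral_const_mul, intervalIntegral.integral_const_mul]
    rw [hI] at hint_pos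
    have hsplit1 : (∫ η in γ..β, ρ η / η) + (∫ η in β..1, ρ η / η)
        = ∫ η in γ..1, ρ η / η :=
      intervalIntegral.integral_add_adjacent_intervals (hint1.mono_set hsubγβ)
        (hint1.mono_set (hsub β 1 hβ (by norm_num)))
    have hsplit2 : (∫ η in (0:ℝ)..γ, ρ η / (1 - η)) + (∫ η in γ..β, ρ η / (1 - η))
        = ∫ η in (0:ℝ)..β, ρ η / (1 - η) :=
      intervalIntegral.integral_add_adjacent_intervals
        (hint2.mono_set (hsub 0 γ (by norm_num) hγ)) (hint2.mono_set hsubγβ)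
    have hFlt : F α γ < F α β := by
      rw [hF, hF, ← hsplit1, ← hsplit2]
      nlinarith [hint_pos]
    exact absurd (hmin α γ hαγ hα hγ) (not_le.2 hFlt)
end

section
/- Let m, n ≥ 0 with m + n > 0, T₁, T₂ > 0, π ∈ ℝ, and set v₁ = σ(π)/T₁, v₂ = (1-σ(π))/T₂ where σ is the logistic sigmoid. If m > 0 and n > 0, then logit( m·v₁ / (m·v₁ + n·v₂) ) = logit( m/(m+n) ) - logit( T₁/(T₁+T₂) ) + π. -/
open Real

lemma div_add_div_one_sub_div_add {a b : ℝ} (h : a + b ≠ 0) :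
    a / (a + b) / (1 - a / (a + b)) = a / b := by
  rw [one_sub_div h, add_sub_cancel_left, div_div_div_cancel_right₀ h]

lemma sigmoid_div_one_sub_sigmoid (x : ℝ) : sigmoid x / (1 - sigmoid x) = exp x := by
  rw [← sigmoid_neg, ← sigmoid_mul_rexp_neg, div_mul_cancel_left₀ (sigmoid_pos x).ne',
    exp_neg, inv_inv]

/-- Prior-independence identity (Theorem 5): with weights `v₁ = σ(π)/T₁`,
`v₂ = (1-σ(π))/T₂`, the logit of the weighted proportion satisfies
`logit(m v₁/(m v₁ + n v₂)) = logit(m/(m+n)) - logit(T₁/(T₁+T₂)) + π`. -/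
theorem stmt16 (m n T₁ T₂ pr : ℝ) (hm : 0 < m) (hn : 0 < n)
    (hT₁ : 0 < T₁) (hT₂ : 0 < T₂)
    (v₁ v₂ : ℝ)
    (hv₁ : v₁ = (1 / (1 + Real.exp (-pr))) / T₁)
    (hv₂ : v₂ = (1 - 1 / (1 + Real.exp (-pr))) / T₂) :
    Real.log ((m * v₁ / (m * v₁ + n * v₂)) / (1 - m * v₁ / (m * v₁ + n * v₂)))
      = Real.log ((m / (m + n)) / (1 - m / (m + n)))
        - Real.log ((T₁ / (T₁ + T₂)) / (1 - T₁ / (T₁ + T₂))) + pr := by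
  have hσ : 1 / (1 + exp (-pr)) = sigmoid pr := one_div _
  have hσ' : 0 < 1 - sigmoid pr := sub_pos.2 (sigmoid_lt_one pr)
  rw [hσ] at hv₁ hv₂
  have hv₁_pos : 0 < v₁ := hv₁ ▸ div_pos (sigmoid_pos pr) hT₁
  have hv₂_pos : 0 < v₂ := hv₂ ▸ div_pos hσ' hT₂
  have hodds : m * v₁ / (n * v₂) = m / n / (T₁ / T₂) * (sigmoid pr / (1 - sigmoid pr)) := by
    rw [hv₁, hv₂]
    field_simp
  rw [div_add_div_one_sub_div_add (by positivity), div_add_div_one_sub_div_add (by positivity),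
    div_add_div_one_sub_div_add (by positivity), hodds, sigmoid_div_one_sub_sigmoid,
    log_mul (by positivity) (exp_pos pr).ne', log_div (by positivity) (by positivity), log_exp]
end

section
/- Let r ∈ (0,1) and suppose the optimal value over monotone solutions (p_i ≤ ⋯ ≤ p_j) of the subproblem objective is attained by the constant solution at r, with r_{i,k} ≥ r for all k in [i,j] (where r_{i,k} is the weighted H₁-proportion of the prefix block). Then for any α with 0 ≤ α < r, the minimum of the subproblem objective subject to the additional constraint p_j ≤ α is attained by the constant solution p_i = ⋯ = p_j = α, for every RBPSR. -/
open MeasureTheory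

open Finset

/-!
For a block with `H₁`-weight `A` and `H₂`-weight `B`, the cost `A C(H₁,q) + B C(H₂,q)` of the
constant solution at `q` has derivative `ρ(q) (B/(1-q) - A/q)`, which is nonpositive for
`q ≤ A/(A+B)`; so the cost is nonincreasing on `[0, r_block]`. Given a monotone `p` with
`p_j ≤ α`, we have `p_{k+1} ≤ α < r ≤ r_{i,k}`, so raising the constant `p_k` on the prefix `i..k`
to `p_{k+1}` does not increase its cost. By induction the constant solution at `p_j` costs at most
`Obj_{i,j}(p)`, and raising it further to `α ≤ r_{i,j}` again does not increase the cost.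
-/

noncomputable def blockObj (ρ : ℝ → ℝ) (ℓ : ℕ → Bool) (v₁ v₂ : ℝ) (i k : ℕ) (p : ℕ → ℝ) : ℝ :=
  ∑ t ∈ Icc i k, (if ℓ t then v₁ else v₂) * Crho ρ (ℓ t) (p t)

theorem weighted_Crho_le_of_le {ρ : ℝ → ℝ} (hρ : ∀ η ∈ Set.Icc (0:ℝ) 1, 0 ≤ ρ η)
    (hI₁ : IntervalIntegrable (fun η => ρ η / η) volume 0 1)
    (hI₂ : IntervalIntegrable (fun η => ρ η / (1 - η)) volume 0 1)
    {A B q₁ q₂ : ℝ} (hA : 0 ≤ A) (hB : 0 ≤ B) (hq₁ : 0 ≤ q₁) (hq : q₁ ≤ q₂) (hq₂ : q₂ ≤ 1)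
    (hAB : q₂ * (A + B) ≤ A) :
    A * Crho ρ true q₂ + B * Crho ρ false q₂ ≤ A * Crho ρ true q₁ + B * Crho ρ false q₁ := by
  have sub : ∀ {c d : ℝ}, 0 ≤ c → c ≤ d → d ≤ 1 → Set.uIcc c d ⊆ Set.uIcc 0 1 := by
    intro c d hc hcd hd
    rw [Set.uIcc_of_le zero_le_one]
    exact Set.uIcc_subset_Icc ⟨hc, hcd.trans hd⟩ ⟨hc.trans hcd, hd⟩
  have hI₁' := hI₁.mono_set (sub hq₁ hq hq₂)
  have hI₂' := hI₂.mono_set (sub hq₁ hq hq₂)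
  have key : B * ∫ η in q₁..q₂, ρ η / (1 - η) ≤ A * ∫ η in q₁..q₂, ρ η / η := by
    rw [← intervalIntegral.integral_const_mul, ← intervalIntegral.integral_const_mul]
    refine intervalIntegral.integral_mono_on_of_le_Ioo hq (hI₂'.const_mul B) (hI₁'.const_mul A)
      fun η ⟨hqη, hηq⟩ => ?_
    have hη₀ : 0 < η := hq₁.trans_lt hqη
    have hη₁ : 0 < 1 - η := by linarith
    -- `B η ≤ A (1 - η)` because `η (A + B) ≤ q₂ (A + B) ≤ A`
    have hw : B / (1 - η) ≤ A / η := by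
      rw [div_le_div_iff₀ hη₁ hη₀]
      nlinarith [mul_le_mul_of_nonneg_right hηq.le (add_nonneg hA hB)]
    calc B * (ρ η / (1 - η)) = ρ η * (B / (1 - η)) := by ring
      _ ≤ ρ η * (A / η) := mul_le_mul_of_nonneg_left hw (hρ η ⟨hη₀.le, by linarith⟩)
      _ = A * (ρ η / η) := by ring
  have split₁ := intervalIntegral.integral_add_adjacent_intervals hI₁'
    (hI₁.mono_set (sub (hq₁.trans hq) hq₂ le_rfl))
  have split₂ := intervalIntegral.integral_add_adjacent_intervals
    (hI₂.mono_set (sub le_rfl hq₁ (hq.trans hq₂))) hI₂'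
  simp only [Crho, ← split₁, ← split₂]
  linarith

theorem sum_ite_mul_eq {α : Type*} (ℓ : α → Bool) (v₁ v₂ : ℝ) (c : Bool → ℝ) (S : Finset α) :
    ∑ t ∈ S, (if ℓ t then v₁ else v₂) * c (ℓ t) =
      #(S.filter fun t => ℓ t = true) * v₁ * c true +
        #(S.filter fun t => ℓ t = false) * v₂ * c false := by
  rw [← sum_filter_add_sum_filter_not S (fun t => ℓ t = true)]
  simp only [Bool.not_eq_true]
  congr 1
  · rw [sum_congr rfl fun t ht => by rw [(mem_filter.1 ht).2], sum_const, nsmul_eq_mul]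
    simp only [ite_true, mul_assoc]
  · rw [sum_congr rfl fun t ht => by rw [(mem_filter.1 ht).2], sum_const, nsmul_eq_mul]
    simp only [Bool.false_eq_true, ite_false, mul_assoc]

section BlockObj

variable {ρ : ℝ → ℝ} {ℓ : ℕ → Bool} {v₁ v₂ : ℝ}

theorem blockObj_const (i k : ℕ) (q : ℝ) :
    blockObj ρ ℓ v₁ v₂ i k (fun _ => q) =
      #((Icc i k).filter fun t => ℓ t = true) * v₁ * Crho ρ true q +
        #((Icc i k).filter fun t => ℓ t = false) * v₂ * Crho ρ false q :=
  sum_ite_mul_eq ℓ v₁ v₂ (fun b => Crho ρ b q) (Icc i k)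

theorem blockObj_succ {i k : ℕ} (hik : i ≤ k + 1) (p : ℕ → ℝ) :
    blockObj ρ ℓ v₁ v₂ i (k + 1) p =
      blockObj ρ ℓ v₁ v₂ i k p + (if ℓ (k + 1) then v₁ else v₂) * Crho ρ (ℓ (k + 1)) (p (k + 1)) :=
  sum_Icc_succ_top hik _

theorem pavrN_le_one (hv₁ : 0 ≤ v₁) (hv₂ : 0 ≤ v₂) (i k : ℕ) : pavrN ℓ v₁ v₂ i k ≤ 1 :=
  div_le_one_of_le₀ (le_add_of_nonneg_right (by positivity)) (by positivity)

variable (hρ : ∀ η ∈ Set.Icc (0:ℝ) 1, 0 ≤ ρ η)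
    (hI₁ : IntervalIntegrable (fun η => ρ η / η) volume 0 1)
    (hI₂ : IntervalIntegrable (fun η => ρ η / (1 - η)) volume 0 1)
    (hv₁ : 0 ≤ v₁) (hv₂ : 0 ≤ v₂)
include hρ hI₁ hI₂ hv₁ hv₂

theorem blockObj_const_le_of_le_pavrN {i k : ℕ} {q₁ q₂ : ℝ} (hq₁ : 0 ≤ q₁) (hq : q₁ ≤ q₂)
    (hq₂ : q₂ ≤ pavrN ℓ v₁ v₂ i k) :
    blockObj ρ ℓ v₁ v₂ i k (fun _ => q₂) ≤ blockObj ρ ℓ v₁ v₂ i k (fun _ => q₁) := by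
  rw [blockObj_const, blockObj_const]
  have hA : (0:ℝ) ≤ #((Icc i k).filter fun t => ℓ t = true) * v₁ := by positivity
  have hB : (0:ℝ) ≤ #((Icc i k).filter fun t => ℓ t = false) * v₂ := by positivity
  exact weighted_Crho_le_of_le hρ hI₁ hI₂ hA hB hq₁ hq (hq₂.trans (pavrN_le_one hv₁ hv₂ i k))
    (mul_le_of_le_div₀ hA (add_nonneg hA hB) hq₂)

theorem blockObj_const_le_blockObj {i j : ℕ} {p : ℕ → ℝ} (hp : MonotoneOn p (Set.Icc i j))
    (hp₀ : ∀ t ∈ Set.Icc i j, 0 ≤ p t) (hpj : ∀ k, i ≤ k → k ≤ j → p j ≤ pavrN ℓ v₁ v₂ i k)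
    {k : ℕ} (hik : i ≤ k) (hkj : k ≤ j) :
    blockObj ρ ℓ v₁ v₂ i k (fun _ => p k) ≤ blockObj ρ ℓ v₁ v₂ i k p := by
  induction k, hik using Nat.le_induction with
  | base => simp [blockObj]
  | succ k hik ih =>
    have hk : k ∈ Set.Icc i j := ⟨hik, by omega⟩
    have hk₁ : k + 1 ∈ Set.Icc i j := ⟨by omega, hkj⟩
    have lift : blockObj ρ ℓ v₁ v₂ i k (fun _ => p (k + 1)) ≤ blockObj ρ ℓ v₁ v₂ i k (fun _ => p k) :=
      blockObj_const_le_of_le_pavrN hρ hI₁ hI₂ hv₁ hv₂ (hp₀ k hk) (hp hk hk₁ k.le_succ)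
        ((hp hk₁ ⟨hik.trans hk.2, le_rfl⟩ hkj).trans (hpj k hik hk.2))
    rw [blockObj_succ (by omega), blockObj_succ (by omega)]
    linarith [ih hk.2]

end BlockObj

theorem stmt19_general (ℓ : ℕ → Bool) (v₁ v₂ : ℝ) (hv₁ : 0 < v₁) (hv₂ : 0 < v₂)
    (i j : ℕ) (hij : i ≤ j)
    (r : ℝ)
    (hprefix : ∀ k, i ≤ k → k ≤ j → r ≤ pavrN ℓ v₁ v₂ i k) :
    ∀ ρ : ℝ → ℝ,
      (∀ η ∈ Set.Icc (0:ℝ) 1, 0 ≤ ρ η) →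
      (∫ η in (0:ℝ)..1, ρ η) = 1 →
      IntervalIntegrable (fun η => ρ η / η) volume 0 1 →
      IntervalIntegrable (fun η => ρ η / (1 - η)) volume 0 1 →
      ∀ α, 0 ≤ α → α < r →
      ∀ p : ℕ → ℝ, MonotoneOn p (Set.Icc i j) →
        (∀ t ∈ Set.Icc i j, p t ∈ Set.Icc (0:ℝ) 1) →
        p j ≤ α →
        (∑ t ∈ Finset.Icc i j, (if ℓ t then v₁ else v₂) * Crho ρ (ℓ t) α) ≤
          ∑ t ∈ Finset.Icc i j, (if ℓ t then v₁ else v₂) * Crho ρ (ℓ t) (p t) := by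
  intro ρ hρ _ hI₁ hI₂ α _ hαr p hp hp01 hpj
  have hα : ∀ k, i ≤ k → k ≤ j → α ≤ pavrN ℓ v₁ v₂ i k :=
    fun k hik hkj => hαr.le.trans (hprefix k hik hkj)
  have hp₀ : ∀ t ∈ Set.Icc i j, 0 ≤ p t := fun t ht => (hp01 t ht).1
  calc blockObj ρ ℓ v₁ v₂ i j (fun _ => α)
      ≤ blockObj ρ ℓ v₁ v₂ i j (fun _ => p j) :=
        blockObj_const_le_of_le_pavrN hρ hI₁ hI₂ hv₁.le hv₂.le (hp₀ j ⟨hij, le_rfl⟩) hpj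
          (hα j hij le_rfl)
    _ ≤ blockObj ρ ℓ v₁ v₂ i j p :=
        blockObj_const_le_blockObj hρ hI₁ hI₂ hv₁.le hv₂.le hp hp₀
          (fun k hik hkj => hpj.trans (hα k hik hkj)) hij le_rfl

/-- Lemma 4 (augmented subproblem, upper-clamped): suppose the constant solution at
`r = r_{i,j}` is optimal for the subproblem over monotone `[0,1]`-valued solutions for
every RBPSR, and `r_{i,k} ≥ r` for every prefix block `(i,k)`.  Then for any
`0 ≤ α < r`, the subproblem augmented with the constraint `p_j ≤ α` is minimized,
for every RBPSR, by the constant solution `p_i = ⋯ = p_j = α`. -/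
theorem stmt19 (ℓ : ℕ → Bool) (v₁ v₂ : ℝ) (hv₁ : 0 < v₁) (hv₂ : 0 < v₂)
    (i j : ℕ) (hij : i ≤ j)
    (r : ℝ) (hr01 : r ∈ Set.Ioo (0:ℝ) 1)
    (hr : r = pavrN ℓ v₁ v₂ i j)
    (hprefix : ∀ k, i ≤ k → k ≤ j → r ≤ pavrN ℓ v₁ v₂ i k)
    (hopt : ∀ ρ : ℝ → ℝ,
      (∀ η ∈ Set.Icc (0:ℝ) 1, 0 ≤ ρ η) →
      (∫ η in (0:ℝ)..1, ρ η) = 1 →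
      IntervalIntegrable (fun η => ρ η / η) volume 0 1 →
      IntervalIntegrable (fun η => ρ η / (1 - η)) volume 0 1 →
      ∀ p : ℕ → ℝ, MonotoneOn p (Set.Icc i j) →
        (∀ t ∈ Set.Icc i j, p t ∈ Set.Icc (0:ℝ) 1) →
        (∑ t ∈ Finset.Icc i j, (if ℓ t then v₁ else v₂) * Crho ρ (ℓ t) r) ≤
          ∑ t ∈ Finset.Icc i j, (if ℓ t then v₁ else v₂) * Crho ρ (ℓ t) (p t)) :
    ∀ ρ : ℝ → ℝ,
      (∀ η ∈ Set.Icc (0:ℝ) 1, 0 ≤ ρ η) →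
      (∫ η in (0:ℝ)..1, ρ η) = 1 →
      IntervalIntegrable (fun η => ρ η / η) volume 0 1 →
      IntervalIntegrable (fun η => ρ η / (1 - η)) volume 0 1 →
      ∀ α, 0 ≤ α → α < r →
      ∀ p : ℕ → ℝ, MonotoneOn p (Set.Icc i j) →
        (∀ t ∈ Set.Icc i j, p t ∈ Set.Icc (0:ℝ) 1) →
        p j ≤ α →
        (∑ t ∈ Finset.Icc i j, (if ℓ t then v₁ else v₂) * Crho ρ (ℓ t) α) ≤
          ∑ t ∈ Finset.Icc i j, (if ℓ t then v₁ else v₂) * Crho ρ (ℓ t) (p t) :=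
  stmt19_general ℓ v₁ v₂ hv₁ hv₂ i j hij r hprefix
end
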